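/- arXiv:0801.1966 — 5 statements merged into one kernel-verified Lean document; each statement's English description precedes it below -/
import Mathlib

section
/- Let X be a nonempty set and let L be a coherent lower prevision on X such that L(f∘T) ≥ L(f) for every gamble f on X and every map T : X → X. Then L is the vacuous lower prevision: L(f) = inf f for every gamble f on X. -/
def IsGamble {X : Type*} (f : X → ℝ) : Prop :=
  BddAbove (Set.range f) ∧ BddBelow (Set.range f)

def IsCoherentLowerPrevision {X : Type*} (L : (X → ℝ) → ℝ) : Prop :=
  (∀ f : X → ℝ, IsGamble f → sInf (Set.range f) ≤ L f) ∧
  (∀ f g : X → ℝ, IsGamble f → IsGamble g → L f + L g ≤ L (f + g)) ∧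
  (∀ f : X → ℝ, IsGamble f → ∀ c : ℝ, 0 ≤ c → L (c • f) = c * L f)

def IsCoherentPrevision {X : Type*} (P : (X → ℝ) → ℝ) : Prop :=
  (∀ f g : X → ℝ, IsGamble f → IsGamble g → P (f + g) = P f + P g) ∧
  (∀ f : X → ℝ, IsGamble f → sInf (Set.range f) ≤ P f)

def IsTransformationMonoid {X : Type*} (𝒯 : Set (X → X)) : Prop :=
  id ∈ 𝒯 ∧ ∀ S ∈ 𝒯, ∀ T ∈ 𝒯, S ∘ T ∈ 𝒯

def Dominating {X : Type*} (L : (X → ℝ) → ℝ) : Set ((X → ℝ) → ℝ) :=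
  {P | IsCoherentPrevision P ∧ ∀ f : X → ℝ, IsGamble f → L f ≤ P f}

/- Composing with the constant map `fun _ => x` turns any gamble `f` into the constant gamble
`f x`, and a coherent lower prevision gives each constant its value. Invariance therefore yields
`L f ≤ f x` for every `x`, i.e. `L f ≤ inf f`, while coherence gives the reverse inequality. -/

theorem isGamble_const {X : Type*} (c : ℝ) : IsGamble (fun _ : X => c) :=
  ⟨⟨c, by rintro _ ⟨_, rfl⟩; rfl⟩, ⟨c, by rintro _ ⟨_, rfl⟩; rfl⟩⟩

namespace IsCoherentLowerPrevision

variable {X : Type*} {L : (X → ℝ) → ℝ}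

theorem apply_zero (hL : IsCoherentLowerPrevision L) : L 0 = 0 := by
  simpa using hL.2.2 0 (isGamble_const 0) 0 le_rfl

theorem const_le_apply_const [Nonempty X] (hL : IsCoherentLowerPrevision L) (c : ℝ) :
    c ≤ L (fun _ : X => c) := by
  simpa [Set.range_const] using hL.1 (fun _ : X => c) (isGamble_const c)

theorem apply_const [Nonempty X] (hL : IsCoherentLowerPrevision L) (c : ℝ) :
    L (fun _ : X => c) = c := by
  have hsuper := hL.2.1 (fun _ : X => c) (fun _ : X => -c) (isGamble_const c) (isGamble_const (-c))
  have hsum : (fun _ : X => c) + (fun _ : X => -c) = 0 := by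
    funext; simp
  rw [hsum, hL.apply_zero] at hsuper
  linarith [hL.const_le_apply_const c, hL.const_le_apply_const (-c)]

end IsCoherentLowerPrevision

theorem stmt2 (X : Type*) [Nonempty X] (L : (X → ℝ) → ℝ)
    (hL : IsCoherentLowerPrevision L)
    (hinv : ∀ f : X → ℝ, IsGamble f → ∀ T : X → X, L f ≤ L (f ∘ T)) :
    ∀ f : X → ℝ, IsGamble f → L f = sInf (Set.range f) := by
  intro f hf
  refine le_antisymm (le_csInf (Set.range_nonempty f) ?_) (hL.1 f hf)
  rintro _ ⟨x, rfl⟩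
  calc L f ≤ L (f ∘ fun _ => x) := hinv f hf fun _ => x
    _ = f x := hL.apply_const (f x)
end

section
/- Let X be a nonempty set, 𝒯 a monoid of transformations of X, L a coherent lower prevision on X, D = {f : f is a gamble and L(f) ≥ 0}, and 𝓜(L) the set of coherent previsions dominating L. Then the following are equivalent: (1) f − f∘T ∈ D and f∘T − f ∈ D for every gamble f and every T ∈ 𝒯; (2) L(f − f∘T) ≥ 0 and L(f∘T − f) ≥ 0 (and then necessarily L(f − f∘T) = L(f∘T − f) = 0) for every gamble f and every T ∈ 𝒯; (3) P(f∘T) = P(f) for every P ∈ 𝓜(L), every gamble f and every T ∈ 𝒯. -/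
/-!
The substance is the lower envelope theorem: Hahn–Banach, applied to the sublinear conjugate
`h ↦ -L (-h)` on the space of gambles, gives for every gamble `g` a dominating coherent prevision
`P` with `P g = L g`. Hence `0 ≤ L g` iff `0 ≤ P g` for all `P ∈ 𝓜(L)`, and by linearity of `P`
the two inequalities of (2) say exactly that `P (f ∘ T) = P f`. The vanishing in (2) comes from
`L g + L (-g) ≤ L 0 = 0`.
-/

theorem exists_linearMap_le_sublinear_eq {E : Type*} [AddCommGroup E] [Module ℝ E] (N : E → ℝ)
    (N_hom : ∀ c : ℝ, 0 < c → ∀ x, N (c • x) = c * N x) (N_add : ∀ x y, N (x + y) ≤ N x + N y)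
    (x₀ : E) : ∃ ℓ : E →ₗ[ℝ] ℝ, (∀ x, ℓ x ≤ N x) ∧ ℓ x₀ = N x₀ := by
  have N_zero : N 0 = 0 := by grind [N_hom 2 (by norm_num) 0, smul_zero]
  have N_add_neg : 0 ≤ N x₀ + N (-x₀) := by simpa [N_zero] using N_add x₀ (-x₀)
  have H : ∀ c : ℝ, c • x₀ = 0 → c • N x₀ = 0 := by
    intro c hc
    rcases smul_eq_zero.1 hc with rfl | rfl
    · simp
    · simp [N_zero]
  have le_on_span : ∀ c : ℝ, c * N x₀ ≤ N (c • x₀) := by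
    intro c
    rcases lt_trichotomy c 0 with hc | rfl | hc
    · rw [show c • x₀ = (-c) • -x₀ by simp, N_hom _ (neg_pos.2 hc)]
      nlinarith
    · simp [N_zero]
    · rw [N_hom c hc]
  let f := LinearPMap.mkSpanSingleton' (σ := RingHom.id ℝ) x₀ (N x₀) H
  obtain ⟨ℓ, hℓf, hℓN⟩ := exists_extension_of_le_sublinear f N N_hom N_add <| by
    rintro ⟨x, hx⟩
    obtain ⟨c, rfl⟩ := Submodule.mem_span_singleton.1 hx
    exact (LinearPMap.mkSpanSingleton'_apply x₀ (N x₀) H c hx).trans_le (le_on_span c)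
  have hx₀ : x₀ ∈ f.domain := Submodule.mem_span_singleton_self x₀
  exact ⟨ℓ, hℓN, (hℓf ⟨x₀, hx₀⟩).trans (LinearPMap.mkSpanSingleton'_apply_self x₀ (N x₀) H hx₀)⟩

section Gambles

variable {X : Type*}

theorem isGamble_iff {f : X → ℝ} : IsGamble f ↔ ∃ C, ∀ x, |f x| ≤ C := by
  rw [IsGamble, and_comm, ← isBounded_iff_bddBelow_bddAbove, isBounded_iff_forall_norm_le]
  simp [Real.norm_eq_abs]

variable (X) in
def gambles : Submodule ℝ (X → ℝ) where
  carrier := {f | IsGamble f}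
  add_mem' := by
    rintro f g hf hg
    obtain ⟨C, hC⟩ := isGamble_iff.1 hf
    obtain ⟨D, hD⟩ := isGamble_iff.1 hg
    exact isGamble_iff.2 ⟨C + D, fun x => (abs_add_le _ _).trans (add_le_add (hC x) (hD x))⟩
  zero_mem' := isGamble_iff.2 ⟨0, by simp⟩
  smul_mem' := by
    rintro c f hf
    obtain ⟨C, hC⟩ := isGamble_iff.1 hf
    refine isGamble_iff.2 ⟨|c| * C, fun x => ?_⟩
    rw [Pi.smul_apply, smul_eq_mul, abs_mul]
    gcongr
    exact hC x

theorem isGamble_zero : IsGamble (0 : X → ℝ) := (gambles X).zero_mem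

theorem IsGamble.neg {f : X → ℝ} (hf : IsGamble f) : IsGamble (-f) := (gambles X).neg_mem hf

theorem IsGamble.sub {f g : X → ℝ} (hf : IsGamble f) (hg : IsGamble g) : IsGamble (f - g) :=
  (gambles X).sub_mem hf hg

theorem IsGamble.comp {f : X → ℝ} (hf : IsGamble f) (T : X → X) : IsGamble (f ∘ T) :=
  ⟨hf.1.mono (Set.range_comp_subset_range T f), hf.2.mono (Set.range_comp_subset_range T f)⟩

end Gambles

theorem IsCoherentPrevision.map_sub {X : Type*} {P : (X → ℝ) → ℝ} (hP : IsCoherentPrevision P)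
    {f g : X → ℝ} (hf : IsGamble f) (hg : IsGamble g) : P (f - g) = P f - P g := by
  have h := hP.1 (f - g) g (hf.sub hg) hg
  rw [sub_add_cancel] at h
  linarith

namespace IsCoherentLowerPrevision

variable {X : Type*} {L : (X → ℝ) → ℝ} (hL : IsCoherentLowerPrevision L)
include hL

theorem map_zero : L 0 = 0 := by
  simpa using hL.2.2 0 isGamble_zero 0 le_rfl

theorem add_neg_nonpos {f : X → ℝ} (hf : IsGamble f) : L f + L (-f) ≤ 0 := by
  simpa [hL.map_zero] using hL.2.1 f (-f) hf hf.neg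

theorem linearMap_mem_dominating (P : (X → ℝ) →ₗ[ℝ] ℝ) (hPL : ∀ f, IsGamble f → L f ≤ P f) :
    ⇑P ∈ Dominating L :=
  ⟨⟨fun f g _ _ => P.map_add f g, fun f hf => (hL.1 f hf).trans (hPL f hf)⟩, hPL⟩

theorem exists_mem_dominating_eq {g : X → ℝ} (hg : IsGamble g) :
    ∃ P ∈ Dominating L, P g = L g := by
  let U : gambles X → ℝ := fun h => -L (-h)
  have U_hom : ∀ c : ℝ, 0 < c → ∀ h, U (c • h) = c * U h := by
    intro c hc h
    simp only [U, Submodule.coe_smul, ← smul_neg, hL.2.2 _ h.2.neg c hc.le]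
    ring
  have U_add : ∀ h k, U (h + k) ≤ U h + U k := by
    intro h k
    have := hL.2.1 _ _ h.2.neg k.2.neg
    simp only [U, Submodule.coe_add, neg_add]
    linarith
  -- `ℓ ≤ U` says `L ≤ ℓ`, and `ℓ (-g) = U (-g)` says `ℓ g = L g`.
  obtain ⟨ℓ, hℓU, hℓg⟩ := exists_linearMap_le_sublinear_eq U U_hom U_add (-⟨g, hg⟩)
  obtain ⟨P, hP⟩ := LinearMap.exists_extend ℓ
  have hPℓ : ∀ h : gambles X, P h = ℓ h := fun h => LinearMap.congr_fun hP h
  have hLP : ∀ f, IsGamble f → L f ≤ P f := by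
    intro f hf
    have := hℓU (-⟨f, hf⟩)
    simp only [U, map_neg, Submodule.coe_neg, neg_neg] at this
    rw [hPℓ ⟨f, hf⟩]
    linarith
  refine ⟨P, hL.linearMap_mem_dominating P hLP, ?_⟩
  simp only [U, map_neg, Submodule.coe_neg, neg_neg, neg_inj] at hℓg
  exact (hPℓ ⟨g, hg⟩).trans hℓg

theorem nonneg_iff_forall_dominating {g : X → ℝ} (hg : IsGamble g) :
    0 ≤ L g ↔ ∀ P ∈ Dominating L, 0 ≤ P g := by
  refine ⟨fun h P hP => h.trans (hP.2 g hg), fun h => ?_⟩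
  obtain ⟨P, hP, hPg⟩ := hL.exists_mem_dominating_eq hg
  exact hPg ▸ h P hP

theorem forall_dominating_eq_iff {f g : X → ℝ} (hf : IsGamble f) (hg : IsGamble g) :
    (∀ P ∈ Dominating L, P g = P f) ↔ 0 ≤ L (f - g) ∧ 0 ≤ L (g - f) := by
  rw [hL.nonneg_iff_forall_dominating (hf.sub hg), hL.nonneg_iff_forall_dominating (hg.sub hf)]
  refine ⟨fun h => ⟨fun P hP => ?_, fun P hP => ?_⟩, fun h P hP => ?_⟩
  · rw [hP.1.map_sub hf hg, h P hP, sub_self]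
  · rw [hP.1.map_sub hg hf, h P hP, sub_self]
  · linarith [h.1 P hP, h.2 P hP, hP.1.map_sub hf hg, hP.1.map_sub hg hf]

theorem eq_zero_of_nonneg_of_neg_nonneg {f : X → ℝ} (hf : IsGamble f) (h : 0 ≤ L f)
    (h' : 0 ≤ L (-f)) : L f = 0 ∧ L (-f) = 0 := by
  have := hL.add_neg_nonpos hf
  constructor <;> linarith

end IsCoherentLowerPrevision

theorem stmt3_general (X : Type*) (𝒯 : Set (X → X)) (L : (X → ℝ) → ℝ)
    (hL : IsCoherentLowerPrevision L) :
    ((∀ f : X → ℝ, IsGamble f → ∀ T ∈ 𝒯,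
        (f - f ∘ T) ∈ {g : X → ℝ | IsGamble g ∧ 0 ≤ L g} ∧
        (f ∘ T - f) ∈ {g : X → ℝ | IsGamble g ∧ 0 ≤ L g}) ↔
      (∀ f : X → ℝ, IsGamble f → ∀ T ∈ 𝒯,
        0 ≤ L (f - f ∘ T) ∧ 0 ≤ L (f ∘ T - f))) ∧
    ((∀ f : X → ℝ, IsGamble f → ∀ T ∈ 𝒯,
        0 ≤ L (f - f ∘ T) ∧ 0 ≤ L (f ∘ T - f)) →
      ∀ f : X → ℝ, IsGamble f → ∀ T ∈ 𝒯,
        L (f - f ∘ T) = 0 ∧ L (f ∘ T - f) = 0) ∧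
    ((∀ f : X → ℝ, IsGamble f → ∀ T ∈ 𝒯,
        0 ≤ L (f - f ∘ T) ∧ 0 ≤ L (f ∘ T - f)) ↔
      (∀ P ∈ Dominating L, ∀ f : X → ℝ, IsGamble f → ∀ T ∈ 𝒯, P (f ∘ T) = P f)) := by
  refine ⟨⟨fun h f hf T hT => ⟨(h f hf T hT).1.2, (h f hf T hT).2.2⟩, fun h f hf T hT => ?_⟩,
    fun h f hf T hT => ?_, ⟨fun h P hP f hf T hT => ?_, fun h f hf T hT => ?_⟩⟩
  · exact ⟨⟨hf.sub (hf.comp T), (h f hf T hT).1⟩, ⟨(hf.comp T).sub hf, (h f hf T hT).2⟩⟩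
  · obtain ⟨h₁, h₂⟩ := h f hf T hT
    rw [← neg_sub f (f ∘ T)] at h₂ ⊢
    exact hL.eq_zero_of_nonneg_of_neg_nonneg (hf.sub (hf.comp T)) h₁ h₂
  · exact (hL.forall_dominating_eq_iff hf (hf.comp T)).2 (h f hf T hT) P hP
  · exact (hL.forall_dominating_eq_iff hf (hf.comp T)).1 fun P hP => h P hP f hf T hT

theorem stmt3 (X : Type*) [Nonempty X] (𝒯 : Set (X → X))
    (h𝒯 : IsTransformationMonoid 𝒯) (L : (X → ℝ) → ℝ)
    (hL : IsCoherentLowerPrevision L) :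
    ((∀ f : X → ℝ, IsGamble f → ∀ T ∈ 𝒯,
        (f - f ∘ T) ∈ {g : X → ℝ | IsGamble g ∧ 0 ≤ L g} ∧
        (f ∘ T - f) ∈ {g : X → ℝ | IsGamble g ∧ 0 ≤ L g}) ↔
      (∀ f : X → ℝ, IsGamble f → ∀ T ∈ 𝒯,
        0 ≤ L (f - f ∘ T) ∧ 0 ≤ L (f ∘ T - f))) ∧
    ((∀ f : X → ℝ, IsGamble f → ∀ T ∈ 𝒯,
        0 ≤ L (f - f ∘ T) ∧ 0 ≤ L (f ∘ T - f)) →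
      ∀ f : X → ℝ, IsGamble f → ∀ T ∈ 𝒯,
        L (f - f ∘ T) = 0 ∧ L (f ∘ T - f) = 0) ∧
    ((∀ f : X → ℝ, IsGamble f → ∀ T ∈ 𝒯,
        0 ≤ L (f - f ∘ T) ∧ 0 ≤ L (f ∘ T - f)) ↔
      (∀ P ∈ Dominating L, ∀ f : X → ℝ, IsGamble f → ∀ T ∈ 𝒯, P (f ∘ T) = P f)) :=
  stmt3_general X 𝒯 L hL
end

section
/- There is no coherent prevision P on the set ℕ of natural numbers such that P(f∘π) = P(f) for every gamble f on ℕ and every bijection π : ℕ → ℕ. -/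
/-!
A permutation-invariant prevision gives one and the same value `c` to the indicators of all
infinite, coinfinite subsets of `ℕ`, since any two such sets are exchanged by a bijection of
`ℕ`. Splitting such a set into two such sets gives `c = 2 * c`, so `c = 0`; but `ℕ` itself
splits into two such sets, so `1 ≤ P 1 = 2 * c`.
-/

open Set

section
variable {X : Type*}

lemma isGamble_indicator_one (s : Set X) : IsGamble (s.indicator (1 : X → ℝ)) := by
  refine ⟨⟨1, ?_⟩, ⟨0, ?_⟩⟩ <;> rintro _ ⟨x, rfl⟩
  · exact indicator_apply_le' (fun _ => le_rfl) (fun _ => zero_le_one)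
  · exact indicator_nonneg (fun _ _ => zero_le_one) x

namespace IsCoherentPrevision
variable {P : (X → ℝ) → ℝ} (hP : IsCoherentPrevision P)
include hP

lemma indicator_union {s t : Set X} (hst : Disjoint s t) :
    P ((s ∪ t).indicator 1) = P (s.indicator 1) + P (t.indicator 1) := by
  rw [indicator_union_of_disjoint hst]
  exact hP.1 _ _ (isGamble_indicator_one s) (isGamble_indicator_one t)

lemma indicator_add_indicator_compl (s : Set X) :
    P (s.indicator 1) + P (sᶜ.indicator 1) = P 1 := by
  rw [← hP.1 _ _ (isGamble_indicator_one s) (isGamble_indicator_one sᶜ),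
    indicator_self_add_compl]

lemma one_le [Nonempty X] : 1 ≤ P 1 := by
  simpa [Pi.one_def, range_const] using hP.2 1 (by simpa using isGamble_indicator_one univ)

end IsCoherentPrevision

lemma exists_perm_preimage_eq {s t : Set X} (e : s ≃ t) (e' : ↥sᶜ ≃ ↥tᶜ) :
    ∃ π : Equiv.Perm X, π ⁻¹' t = s := by
  classical
  refine ⟨Equiv.subtypeCongr e e', Set.ext fun x => ?_⟩
  by_cases hx : x ∈ s
  · simp [Equiv.subtypeCongr, hx]
  · simp only [mem_preimage, Equiv.subtypeCongr, Equiv.trans_apply,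
      Equiv.sumCompl_symm_apply_of_neg hx, Equiv.sumCongr_apply, Sum.map_inr,
      Equiv.sumCompl_apply_inr, hx, iff_false]
    exact (e' ⟨x, hx⟩).2

lemma exists_perm_preimage_eq_of_infinite [Countable X] {s t : Set X}
    (hs : s.Infinite) (hsc : sᶜ.Infinite) (ht : t.Infinite) (htc : tᶜ.Infinite) :
    ∃ π : Equiv.Perm X, π ⁻¹' t = s := by
  have := hs.to_subtype; have := hsc.to_subtype
  have := ht.to_subtype; have := htc.to_subtype
  exact exists_perm_preimage_eq nonempty_equiv_of_countable.some
    nonempty_equiv_of_countable.some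

lemma indicator_eq_of_perm_invariant [Countable X] {P : (X → ℝ) → ℝ}
    (hP : ∀ f : X → ℝ, IsGamble f → ∀ π : X → X, Function.Bijective π → P (f ∘ π) = P f)
    {s t : Set X} (hs : s.Infinite) (hsc : sᶜ.Infinite) (ht : t.Infinite) (htc : tᶜ.Infinite) :
    P (s.indicator 1) = P (t.indicator 1) := by
  obtain ⟨π, hπ⟩ := exists_perm_preimage_eq_of_infinite hs hsc ht htc
  have hcomp : t.indicator (1 : X → ℝ) ∘ π = s.indicator 1 := by
    ext x
    rw [← hπ]
    exact (indicator_comp_right π).symm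
  rw [← hcomp, hP _ (isGamble_indicator_one t) π π.bijective]

end

theorem stmt5 :
    ¬ ∃ P : (ℕ → ℝ) → ℝ, IsCoherentPrevision P ∧
      ∀ f : ℕ → ℝ, IsGamble f → ∀ π : ℕ → ℕ, Function.Bijective π →
        P (f ∘ π) = P f := by
  rintro ⟨P, hP, hinv⟩
  have hmod : ∀ k < 4, {n : ℕ | n % 4 = k}.Infinite := fun k hk =>
    Nat.frequently_atTop_iff_infinite.1 (Nat.frequently_mod_eq hk)
  set s := {n : ℕ | n % 4 = 0}
  set t := {n : ℕ | n % 4 = 1}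
  set r := {n : ℕ | n % 4 = 2}
  have hs : s.Infinite := hmod 0 (by norm_num)
  have ht : t.Infinite := hmod 1 (by norm_num)
  have hr : r.Infinite := hmod 2 (by norm_num)
  have hst : Disjoint s t := disjoint_left.2 fun n (h₀ : n % 4 = 0) (h₁ : n % 4 = 1) => by omega
  have hr_compl : r ⊆ (s ∪ t)ᶜ := fun n (h₂ : n % 4 = 2) (h : n % 4 = 0 ∨ n % 4 = 1) => by omega
  have hu : (s ∪ t).Infinite := hs.mono subset_union_left
  have huc : (s ∪ t)ᶜ.Infinite := hr.mono hr_compl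
  have eq_r {a : Set ℕ} (ha : a.Infinite) (hac : aᶜ.Infinite) :
      P (a.indicator 1) = P (r.indicator 1) :=
    indicator_eq_of_perm_invariant hinv ha hac hr
      (hs.mono fun n (h₀ : n % 4 = 0) (h₂ : n % 4 = 2) => by omega)
  have h_s := eq_r hs (huc.mono (compl_subset_compl.2 subset_union_left))
  have h_t := eq_r ht (huc.mono (compl_subset_compl.2 subset_union_right))
  have h_u := eq_r hu huc
  have h_uc := eq_r huc (by rwa [compl_compl])
  have h_split := hP.indicator_union hst
  have h_total := hP.indicator_add_indicator_compl (s ∪ t)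
  have h_one := hP.one_le
  linarith
end

section
/- Let 𝒯 be a monoid of transformations of a nonempty set X, let 𝒦 be a 𝒯-invariant set of gambles on X (f ∈ 𝒦 and T ∈ 𝒯 imply f∘T ∈ 𝒦), and let L : 𝒦 → ℝ be a weakly 𝒯-invariant lower prevision (L(f∘T) ≥ L(f) for all f ∈ 𝒦, T ∈ 𝒯) that avoids sure loss. Then the natural extension E_L of L satisfies E_L(f∘T) ≥ E_L(f) for every gamble f on X and every T ∈ 𝒯; consequently E_L is the point-wise smallest coherent lower prevision on all gambles that is weakly 𝒯-invariant and dominates L on 𝒦. -/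
def AvoidsSureLoss {X : Type*} (𝒦 : Set (X → ℝ)) (L : (X → ℝ) → ℝ) : Prop :=
  ∀ (n : ℕ) (lam : Fin n → ℝ) (fs : Fin n → X → ℝ),
    (∀ k, 0 ≤ lam k) → (∀ k, fs k ∈ 𝒦) →
    0 ≤ ⨆ x : X, ∑ k, lam k * (fs k x - L (fs k))

noncomputable def NatExt {X : Type*} (𝒦 : Set (X → ℝ)) (L : (X → ℝ) → ℝ)
    (g : X → ℝ) : ℝ :=
  sSup {α : ℝ | ∃ (n : ℕ) (lam : Fin n → ℝ) (fs : Fin n → X → ℝ),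
    (∀ k, 0 ≤ lam k) ∧ (∀ k, fs k ∈ 𝒦) ∧
    α = ⨅ x : X, (g x - ∑ k, lam k * (fs k x - L (fs k)))}

/-!
The natural extension is the lower prevision induced by the convex cone `D` generated by the
gambles `f - L f` (`f ∈ 𝒦`): `E_L g = sup_{h ∈ D} inf (g - h)`. Avoiding sure loss says that no
`h ∈ D` is uniformly negative, which keeps this supremum below `sup g`; coherence comes from `D`
being a cone. Since `L (f ∘ T) ≥ L f`, composing with `T` sends each generator `f - L f` above the
generator `f ∘ T - L (f ∘ T)`, so every `h ∘ T` dominates an element of `D`, which gives weak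
invariance. A coherent `M` dominating `L` is nonnegative on `D`, hence `M g ≥ inf (g - h)` for all
`h ∈ D`, which gives minimality.
-/

open Set

namespace IsGamble

variable {X : Type*} {f g : X → ℝ}

lemma const (c : ℝ) : IsGamble (fun _ : X => c) :=
  ⟨bddAbove_singleton.mono range_const_subset, bddBelow_singleton.mono range_const_subset⟩

lemma add (hf : IsGamble f) (hg : IsGamble g) : IsGamble (f + g) :=
  ⟨hf.1.range_add hg.1, hf.2.range_add hg.2⟩

lemma sub_s6 (hf : IsGamble f) (hg : IsGamble g) : IsGamble (f - g) := by
  rw [sub_eq_add_neg]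
  exact hf.add ⟨hg.2.range_neg, hg.1.range_neg⟩

lemma smul (hf : IsGamble f) {c : ℝ} (hc : 0 ≤ c) : IsGamble (c • f) :=
  ⟨hf.1.range_comp_left (monotone_mul_left_of_nonneg hc),
    hf.2.range_comp_left (monotone_mul_left_of_nonneg hc)⟩

lemma comp_s6 (hf : IsGamble f) (T : X → X) : IsGamble (f ∘ T) :=
  ⟨hf.1.mono (range_comp_subset_range T f), hf.2.mono (range_comp_subset_range T f)⟩

end IsGamble

namespace IsCoherentLowerPrevision

variable {X : Type*} {M : (X → ℝ) → ℝ} {f g : X → ℝ}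

lemma const_le [Nonempty X] (hM : IsCoherentLowerPrevision M) (c : ℝ) : c ≤ M (fun _ => c) := by
  simpa only [range_const, csInf_singleton] using hM.1 _ (IsGamble.const c)

lemma add_const_le [Nonempty X] (hM : IsCoherentLowerPrevision M) (hf : IsGamble f) (c : ℝ) :
    M f + c ≤ M (f + fun _ => c) :=
  (add_le_add_right (hM.const_le c) _).trans (hM.2.1 _ _ hf (IsGamble.const c))

lemma nonneg (hM : IsCoherentLowerPrevision M) (hf : IsGamble f) (hf₀ : ∀ x, 0 ≤ f x) :
    0 ≤ M f :=
  (Real.sInf_nonneg (by rintro _ ⟨x, rfl⟩; exact hf₀ x)).trans (hM.1 f hf)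

lemma mono (hM : IsCoherentLowerPrevision M) (hf : IsGamble f) (hg : IsGamble g)
    (hfg : ∀ x, f x ≤ g x) : M f ≤ M g := by
  have hgf : IsGamble (g - f) := hg.sub_s6 hf
  have h := hM.2.1 f (g - f) hf hgf
  rw [add_sub_cancel] at h
  linarith [hM.nonneg hgf fun x => sub_nonneg.2 (hfg x)]

end IsCoherentLowerPrevision

lemma le_sSup_range_of_le_sub {X : Type*} [Nonempty X] {g h : X → ℝ} {α : ℝ}
    (hg : IsGamble g) (hh : 0 ≤ ⨆ x, h x) (hα : ∀ x, α ≤ g x - h x) : α ≤ sSup (range g) := by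
  have : ⨆ x, h x ≤ sSup (range g) - α :=
    ciSup_le fun x => by linarith [hα x, le_csSup hg.1 (mem_range_self x)]
  linarith

namespace PointedCone

variable {X : Type*} {D : PointedCone ℝ (X → ℝ)} {f g : X → ℝ}

/-- The lower prevision induced by a cone `D` of desirable gambles: the supremum of the
prices `α` for which `g - α` dominates some element of `D`. -/
noncomputable def lowerPrevision (D : PointedCone ℝ (X → ℝ)) (g : X → ℝ) : ℝ :=
  sSup ((fun h : X → ℝ => ⨅ x, (g x - h x)) '' D)

lemma le_lowerPrevision [Nonempty X] (hD : ∀ h ∈ D, IsGamble h) (hsl : ∀ h ∈ D, 0 ≤ ⨆ x, h x)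
    (hg : IsGamble g) {h : X → ℝ} (hh : h ∈ D) {α : ℝ} (hα : ∀ x, α ≤ g x - h x) :
    α ≤ D.lowerPrevision g := by
  have hbdd : BddAbove ((fun h : X → ℝ => ⨅ x, (g x - h x)) '' D) := by
    refine ⟨sSup (range g), ?_⟩
    rintro _ ⟨h', hh', rfl⟩
    exact le_sSup_range_of_le_sub hg (hsl h' hh') fun x => ciInf_le (hg.sub_s6 (hD h' hh')).2 x
  exact le_csSup_of_le hbdd (mem_image_of_mem _ hh) (le_ciInf hα)

lemma lowerPrevision_le (hD : ∀ h ∈ D, IsGamble h) (hg : IsGamble g) {β : ℝ}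
    (H : ∀ h ∈ D, ∀ α : ℝ, (∀ x, α ≤ g x - h x) → α ≤ β) : D.lowerPrevision g ≤ β := by
  refine csSup_le ⟨_, mem_image_of_mem _ D.zero_mem⟩ ?_
  rintro _ ⟨h, hh, rfl⟩
  exact H h hh _ fun x => ciInf_le (hg.sub_s6 (hD h hh)).2 x

lemma sInf_range_le_lowerPrevision [Nonempty X] (hD : ∀ h ∈ D, IsGamble h)
    (hsl : ∀ h ∈ D, 0 ≤ ⨆ x, h x) (hg : IsGamble g) : sInf (range g) ≤ D.lowerPrevision g :=
  le_lowerPrevision hD hsl hg D.zero_mem fun x => by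
    simpa using csInf_le hg.2 (mem_range_self x)

lemma lowerPrevision_le_sSup_range [Nonempty X] (hD : ∀ h ∈ D, IsGamble h)
    (hsl : ∀ h ∈ D, 0 ≤ ⨆ x, h x) (hg : IsGamble g) : D.lowerPrevision g ≤ sSup (range g) :=
  lowerPrevision_le hD hg fun h hh _ hα => le_sSup_range_of_le_sub hg (hsl h hh) hα

lemma lowerPrevision_zero [Nonempty X] (hD : ∀ h ∈ D, IsGamble h)
    (hsl : ∀ h ∈ D, 0 ≤ ⨆ x, h x) : D.lowerPrevision 0 = 0 := by
  have h0 : IsGamble (0 : X → ℝ) := IsGamble.const 0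
  have hr : range (0 : X → ℝ) = {0} := range_const
  have hle := lowerPrevision_le_sSup_range hD hsl h0
  have hge := sInf_range_le_lowerPrevision hD hsl h0
  rw [hr, csSup_singleton] at hle
  rw [hr, csInf_singleton] at hge
  exact le_antisymm hle hge

lemma add_le_lowerPrevision_add [Nonempty X] (hD : ∀ h ∈ D, IsGamble h)
    (hsl : ∀ h ∈ D, 0 ≤ ⨆ x, h x) (hf : IsGamble f) (hg : IsGamble g) :
    D.lowerPrevision f + D.lowerPrevision g ≤ D.lowerPrevision (f + g) := by
  suffices D.lowerPrevision f ≤ D.lowerPrevision (f + g) - D.lowerPrevision g by linarith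
  refine lowerPrevision_le hD hf fun h₁ hh₁ α₁ hα₁ => le_sub_comm.1 ?_
  refine lowerPrevision_le hD hg fun h₂ hh₂ α₂ hα₂ => le_sub_iff_add_le.2 ?_
  refine le_lowerPrevision hD hsl (hf.add hg) (D.add_mem hh₁ hh₂) fun x => ?_
  simp only [Pi.add_apply]
  linarith [hα₁ x, hα₂ x]

lemma mul_le_lowerPrevision_smul [Nonempty X] (hD : ∀ h ∈ D, IsGamble h)
    (hsl : ∀ h ∈ D, 0 ≤ ⨆ x, h x) (hf : IsGamble f) {c : ℝ} (hc : 0 < c) :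
    c * D.lowerPrevision f ≤ D.lowerPrevision (c • f) := by
  rw [mul_comm, ← le_div_iff₀ hc]
  refine lowerPrevision_le hD hf fun h hh α hα => (le_div_iff₀' hc).2 ?_
  refine le_lowerPrevision hD hsl (hf.smul hc.le) (D.smul_mem hc.le hh) fun x => ?_
  simp only [Pi.smul_apply, smul_eq_mul, ← mul_sub]
  exact mul_le_mul_of_nonneg_left (hα x) hc.le

lemma lowerPrevision_smul [Nonempty X] (hD : ∀ h ∈ D, IsGamble h)
    (hsl : ∀ h ∈ D, 0 ≤ ⨆ x, h x) (hf : IsGamble f) {c : ℝ} (hc : 0 ≤ c) :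
    D.lowerPrevision (c • f) = c * D.lowerPrevision f := by
  rcases hc.eq_or_lt with rfl | hc
  · rw [zero_smul, zero_mul, lowerPrevision_zero hD hsl]
  have h := mul_le_lowerPrevision_smul hD hsl (hf.smul hc.le) (inv_pos.2 hc)
  rw [inv_smul_smul₀ hc.ne', inv_mul_le_iff₀ hc] at h
  exact le_antisymm h (mul_le_lowerPrevision_smul hD hsl hf hc)

theorem isCoherentLowerPrevision_lowerPrevision [Nonempty X] (hD : ∀ h ∈ D, IsGamble h)
    (hsl : ∀ h ∈ D, 0 ≤ ⨆ x, h x) : IsCoherentLowerPrevision D.lowerPrevision :=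
  ⟨fun _ hf => sInf_range_le_lowerPrevision hD hsl hf,
    fun _ _ hf hg => add_le_lowerPrevision_add hD hsl hf hg,
    fun _ hf _ hc => lowerPrevision_smul hD hsl hf hc⟩

lemma lowerPrevision_le_lowerPrevision_comp [Nonempty X] (hD : ∀ h ∈ D, IsGamble h)
    (hsl : ∀ h ∈ D, 0 ≤ ⨆ x, h x) (hg : IsGamble g) {T : X → X}
    (hT : ∀ h ∈ D, ∃ h' ∈ D, ∀ x, h' x ≤ h (T x)) :
    D.lowerPrevision g ≤ D.lowerPrevision (g ∘ T) :=
  lowerPrevision_le hD hg fun h hh α hα => by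
    obtain ⟨h', hh', hle⟩ := hT h hh
    exact le_lowerPrevision hD hsl (hg.comp_s6 T) hh' fun x => by
      linarith [hα (T x), hle x, show (g ∘ T) x = g (T x) from rfl]

lemma lowerPrevision_le_of_nonneg [Nonempty X] (hD : ∀ h ∈ D, IsGamble h)
    {M : (X → ℝ) → ℝ} (hM : IsCoherentLowerPrevision M) (hMD : ∀ h ∈ D, 0 ≤ M h)
    (hg : IsGamble g) : D.lowerPrevision g ≤ M g :=
  lowerPrevision_le hD hg fun h hh α hα => by
    have hhα : IsGamble (h + fun _ => α) := (hD h hh).add (IsGamble.const α)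
    have hmono := hM.mono hhα hg fun x => by
      simp only [Pi.add_apply]
      linarith [hα x]
    linarith [hM.add_const_le (hD h hh) α, hMD h hh]

end PointedCone

section DesirableCone

variable {X : Type*} {𝒦 : Set (X → ℝ)} {L : (X → ℝ) → ℝ} {h : X → ℝ}

def desirableCone (𝒦 : Set (X → ℝ)) (L : (X → ℝ) → ℝ) : PointedCone ℝ (X → ℝ) :=
  PointedCone.hull ℝ ((fun f => f - fun _ => L f) '' 𝒦)

lemma mem_desirableCone_iff : h ∈ desirableCone 𝒦 L ↔
    ∃ (n : ℕ) (lam : Fin n → ℝ) (fs : Fin n → X → ℝ), (∀ k, 0 ≤ lam k) ∧ (∀ k, fs k ∈ 𝒦) ∧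
      h = fun x => ∑ k, lam k * (fs k x - L (fs k)) := by
  constructor
  · intro hh
    obtain ⟨n, c, g, rfl⟩ := Submodule.mem_span_set'.1 hh
    choose fs hfs hg using fun k => (g k).2
    refine ⟨n, fun k => c k, fs, fun k => (c k).2, hfs, ?_⟩
    funext x
    simp only [← hg, Finset.sum_apply, Pi.smul_apply, Pi.sub_apply]
    rfl
  · rintro ⟨n, lam, fs, hlam, hfs, rfl⟩
    refine Submodule.mem_span_set'.2
      ⟨n, fun k => ⟨lam k, hlam k⟩, fun k => ⟨_, mem_image_of_mem _ (hfs k)⟩, ?_⟩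
    funext x
    simp only [Nonneg.mk_smul, Finset.sum_apply, Pi.smul_apply, Pi.sub_apply, smul_eq_mul]

lemma sub_const_mem_desirableCone {f : X → ℝ} (hf : f ∈ 𝒦) :
    (f - fun _ => L f) ∈ desirableCone 𝒦 L :=
  PointedCone.subset_hull (mem_image_of_mem _ hf)

lemma IsGamble.of_mem_desirableCone (h𝒦 : ∀ f ∈ 𝒦, IsGamble f)
    (hh : h ∈ desirableCone 𝒦 L) : IsGamble h := by
  induction hh using Submodule.span_induction with
  | mem _ hf =>
    obtain ⟨f, hf, rfl⟩ := hf
    exact (h𝒦 f hf).sub_s6 (IsGamble.const _)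
  | zero => exact IsGamble.const 0
  | add _ _ _ _ ihf ihg => exact ihf.add ihg
  | smul c _ _ ih => exact ih.smul c.2

lemma AvoidsSureLoss.iSup_nonneg (hasl : AvoidsSureLoss 𝒦 L) (hh : h ∈ desirableCone 𝒦 L) :
    0 ≤ ⨆ x, h x := by
  obtain ⟨n, lam, fs, hlam, hfs, rfl⟩ := mem_desirableCone_iff.1 hh
  exact hasl n lam fs hlam hfs

lemma natExt_eq_lowerPrevision : NatExt 𝒦 L = (desirableCone 𝒦 L).lowerPrevision := by
  funext g
  refine congrArg sSup (Set.ext fun α => ?_)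
  simp only [mem_ofPred_eq, mem_image, SetLike.mem_coe, mem_desirableCone_iff]
  constructor
  · rintro ⟨n, lam, fs, hlam, hfs, rfl⟩
    exact ⟨_, ⟨n, lam, fs, hlam, hfs, rfl⟩, rfl⟩
  · rintro ⟨_, ⟨n, lam, fs, hlam, hfs, rfl⟩, rfl⟩
    exact ⟨n, lam, fs, hlam, hfs, rfl⟩

lemma exists_le_comp_of_mem_desirableCone {T : X → X} (hT𝒦 : ∀ f ∈ 𝒦, f ∘ T ∈ 𝒦)
    (hTL : ∀ f ∈ 𝒦, L f ≤ L (f ∘ T)) (hh : h ∈ desirableCone 𝒦 L) :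
    ∃ h' ∈ desirableCone 𝒦 L, ∀ x, h' x ≤ h (T x) := by
  obtain ⟨n, lam, fs, hlam, hfs, rfl⟩ := mem_desirableCone_iff.1 hh
  refine ⟨_, mem_desirableCone_iff.2
      ⟨n, lam, fun k => fs k ∘ T, hlam, fun k => hT𝒦 _ (hfs k), rfl⟩,
    fun x => Finset.sum_le_sum fun k _ => mul_le_mul_of_nonneg_left ?_ (hlam k)⟩
  linarith [hTL _ (hfs k), show (fs k ∘ T) x = fs k (T x) from rfl]

lemma IsCoherentLowerPrevision.nonneg_of_mem_desirableCone [Nonempty X]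
    {M : (X → ℝ) → ℝ} (hM : IsCoherentLowerPrevision M) (h𝒦 : ∀ f ∈ 𝒦, IsGamble f)
    (hML : ∀ f ∈ 𝒦, L f ≤ M f) (hh : h ∈ desirableCone 𝒦 L) : 0 ≤ M h := by
  induction hh using Submodule.span_induction with
  | mem _ hf =>
    obtain ⟨f, hf, rfl⟩ := hf
    have h := hM.add_const_le (h𝒦 f hf) (-L f)
    rw [show (f + fun _ => -L f) = f - fun _ => L f by ext; simp [sub_eq_add_neg]] at h
    linarith [hML f hf]
  | zero => exact hM.nonneg (IsGamble.const 0) fun _ => le_rfl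
  | add h₁ h₂ hh₁ hh₂ ih₁ ih₂ =>
    have := hM.2.1 h₁ h₂ (.of_mem_desirableCone h𝒦 hh₁) (.of_mem_desirableCone h𝒦 hh₂)
    linarith
  | smul c h' hh' ih =>
    rw [show c • h' = (c : ℝ) • h' from rfl, hM.2.2 h' (.of_mem_desirableCone h𝒦 hh') c c.2]
    exact mul_nonneg c.2 ih

end DesirableCone

theorem stmt6_general (X : Type*) [Nonempty X] (𝒯 : Set (X → X))
    (𝒦 : Set (X → ℝ)) (h𝒦g : ∀ f ∈ 𝒦, IsGamble f)
    (h𝒦T : ∀ f ∈ 𝒦, ∀ T ∈ 𝒯, f ∘ T ∈ 𝒦)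
    (L : (X → ℝ) → ℝ) (hweak : ∀ f ∈ 𝒦, ∀ T ∈ 𝒯, L f ≤ L (f ∘ T))
    (hasl : AvoidsSureLoss 𝒦 L) :
    (∀ f : X → ℝ, IsGamble f → ∀ T ∈ 𝒯, NatExt 𝒦 L f ≤ NatExt 𝒦 L (f ∘ T)) ∧
    IsCoherentLowerPrevision (NatExt 𝒦 L) ∧
    (∀ f ∈ 𝒦, L f ≤ NatExt 𝒦 L f) ∧
    (∀ M : (X → ℝ) → ℝ, IsCoherentLowerPrevision M →
      (∀ f : X → ℝ, IsGamble f → ∀ T ∈ 𝒯, M f ≤ M (f ∘ T)) →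
      (∀ f ∈ 𝒦, L f ≤ M f) →
      ∀ f : X → ℝ, IsGamble f → NatExt 𝒦 L f ≤ M f) := by
  rw [natExt_eq_lowerPrevision]
  have hD : ∀ h ∈ desirableCone 𝒦 L, IsGamble h := fun _ => .of_mem_desirableCone h𝒦g
  have hsl : ∀ h ∈ desirableCone 𝒦 L, 0 ≤ ⨆ x, h x := fun _ => hasl.iSup_nonneg
  refine ⟨fun f hf T hT => ?_, PointedCone.isCoherentLowerPrevision_lowerPrevision hD hsl,
    fun f hf => ?_, fun M hM _ hML f hf => ?_⟩
  · exact PointedCone.lowerPrevision_le_lowerPrevision_comp hD hsl hf fun h hh =>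
      exists_le_comp_of_mem_desirableCone (fun f hf => h𝒦T f hf T hT)
        (fun f hf => hweak f hf T hT) hh
  · exact PointedCone.le_lowerPrevision hD hsl (h𝒦g f hf) (sub_const_mem_desirableCone hf)
      fun x => by simp
  · exact PointedCone.lowerPrevision_le_of_nonneg hD hM
      (fun h hh => hM.nonneg_of_mem_desirableCone h𝒦g hML hh) hf

theorem stmt6 (X : Type*) [Nonempty X] (𝒯 : Set (X → X))
    (h𝒯 : IsTransformationMonoid 𝒯)
    (𝒦 : Set (X → ℝ)) (h𝒦g : ∀ f ∈ 𝒦, IsGamble f)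
    (h𝒦T : ∀ f ∈ 𝒦, ∀ T ∈ 𝒯, f ∘ T ∈ 𝒦)
    (L : (X → ℝ) → ℝ) (hweak : ∀ f ∈ 𝒦, ∀ T ∈ 𝒯, L f ≤ L (f ∘ T))
    (hasl : AvoidsSureLoss 𝒦 L) :
    (∀ f : X → ℝ, IsGamble f → ∀ T ∈ 𝒯, NatExt 𝒦 L f ≤ NatExt 𝒦 L (f ∘ T)) ∧
    IsCoherentLowerPrevision (NatExt 𝒦 L) ∧
    (∀ f ∈ 𝒦, L f ≤ NatExt 𝒦 L f) ∧
    (∀ M : (X → ℝ) → ℝ, IsCoherentLowerPrevision M →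
      (∀ f : X → ℝ, IsGamble f → ∀ T ∈ 𝒯, M f ≤ M (f ∘ T)) →
      (∀ f ∈ 𝒦, L f ≤ M f) →
      ∀ f : X → ℝ, IsGamble f → NatExt 𝒦 L f ≤ M f) :=
  stmt6_general X 𝒯 𝒦 h𝒦g h𝒦T L hweak hasl
end

section
/- Let 𝒯 be a monoid of transformations of a nonempty set X, and let L be a lower prevision on a 𝒯-invariant set 𝒦 of gambles on X that contains the indicator gamble of every subset of X and contains f − f∘T and f∘T − f for all f ∈ 𝒦, T ∈ 𝒯. Assume L avoids sure loss and is strongly 𝒯-invariant on 𝒦, i.e. L(f − f∘T) ≥ 0 and L(f∘T − f) ≥ 0 for all f ∈ 𝒦, T ∈ 𝒯. Then the natural extension E_L of L to all gambles is strongly 𝒯-invariant: E_L(f − f∘T) ≥ 0 and E_L(f∘T − f) ≥ 0 for every gamble f on X and every T ∈ 𝒯. -/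
/-!
Cut the range of a gamble `f` into layers of height `ε`: with `Aᵢ = {f ≥ m + (i + 1) ε}`,
the gamble `f - ε ∑ᵢ 1_{Aᵢ}` oscillates by less than `ε`. Hence
`f ∘ S - f ∘ T ≥ ε ∑ᵢ (1_{Aᵢ} ∘ S - 1_{Aᵢ} ∘ T) - ε`, and since `L` is nonnegative on each
`1_{Aᵢ} ∘ S - 1_{Aᵢ} ∘ T ∈ 𝒦`, this combination witnesses `E_L (f ∘ S - f ∘ T) ≥ -ε`.
Both claims are the cases `(S, T) = (id, T)` and `(T, id)`.
-/

open Finset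

lemma sum_range_ite_add_one_le_eq_floor {t : ℝ} {n : ℕ} (ht : t ≤ n) :
    ∑ i ∈ range n, (if (i + 1 : ℝ) ≤ t then (1 : ℝ) else 0) = ⌊t⌋₊ := by
  have hfilter : (range n).filter (fun i : ℕ => (i + 1 : ℝ) ≤ t) = range ⌊t⌋₊ := by
    ext i
    have hsucc : (i + 1 : ℝ) ≤ t ↔ i < ⌊t⌋₊ := by
      exact_mod_cast (Nat.le_floor_iff' i.succ_ne_zero).symm
    simp only [mem_filter, mem_range, hsucc]
    have := Nat.floor_le_of_le ht
    omega
  rw [sum_boole, hfilter, card_range]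

lemma IsGamble.exists_sub_sum_indicator_mem_Ico {X : Type*} {f : X → ℝ} (hf : IsGamble f)
    {ε : ℝ} (hε : 0 < ε) :
    ∃ (n : ℕ) (A : Fin n → Set X) (c : ℝ), ∀ x,
      f x - ε * ∑ i, (A i).indicator (fun _ => (1 : ℝ)) x ∈ Set.Ico c (c + ε) := by
  obtain ⟨⟨M, hM⟩, ⟨m, hm⟩⟩ := hf
  refine ⟨⌈(M - m) / ε⌉₊, fun i => {x | m + ((i : ℕ) + 1) * ε ≤ f x}, m, fun x => ?_⟩
  set t := (f x - m) / ε
  have hfx : f x = m + ε * t := by simp only [t]; field_simp; ring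
  have ht0 : 0 ≤ t := div_nonneg (by linarith [hm ⟨x, rfl⟩]) hε.le
  have htn : t ≤ ⌈(M - m) / ε⌉₊ :=
    ((div_le_div_iff_of_pos_right hε).2 (by linarith [hM ⟨x, rfl⟩])).trans (Nat.le_ceil _)
  have hcount : ∑ i : Fin ⌈(M - m) / ε⌉₊,
      {x | m + ((i : ℕ) + 1) * ε ≤ f x}.indicator (fun _ => (1 : ℝ)) x = ⌊t⌋₊ := by
    rw [← sum_range_ite_add_one_le_eq_floor htn,
      ← Fin.sum_univ_eq_sum_range (fun i => if (i + 1 : ℝ) ≤ t then (1 : ℝ) else 0)]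
    refine sum_congr rfl fun i _ => if_congr ?_ rfl rfl
    rw [Set.mem_ofPred_eq, hfx, add_le_add_iff_left, mul_comm, mul_le_mul_iff_right₀ hε]
  have hfloor := Nat.floor_le ht0
  have hfloor' := Nat.lt_floor_add_one t
  rw [hcount, Set.mem_Ico]
  constructor <;> nlinarith

lemma natExt_nonneg_of_forall_lower_bound {X : Type*} [Nonempty X] {𝒦 : Set (X → ℝ)}
    {L : (X → ℝ) → ℝ} {g : X → ℝ}
    (H : ∀ ε : ℝ, 0 < ε → ∃ (n : ℕ) (lam : Fin n → ℝ) (fs : Fin n → X → ℝ),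
      (∀ k, 0 ≤ lam k) ∧ (∀ k, fs k ∈ 𝒦) ∧
      ∀ x, -ε ≤ g x - ∑ k, lam k * (fs k x - L (fs k))) :
    0 ≤ NatExt 𝒦 L g := by
  unfold NatExt
  set S := {α : ℝ | ∃ (n : ℕ) (lam : Fin n → ℝ) (fs : Fin n → X → ℝ),
    (∀ k, 0 ≤ lam k) ∧ (∀ k, fs k ∈ 𝒦) ∧
    α = ⨅ x : X, (g x - ∑ k, lam k * (fs k x - L (fs k)))}
  by_cases hS : BddAbove S
  · refine le_of_forall_pos_le_add fun ε hε => ?_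
    obtain ⟨n, lam, fs, hlam, hfs, hbound⟩ := H ε hε
    have hinf := le_ciInf hbound
    have hsup := le_csSup hS ⟨n, lam, fs, hlam, hfs, rfl⟩
    linarith
  · -- an unbounded set of reals has `sSup` equal to `0` by convention
    rw [Real.sSup_of_not_bddAbove hS]

lemma natExt_comp_sub_comp_nonneg {X : Type*} [Nonempty X] {𝒦 : Set (X → ℝ)}
    {L : (X → ℝ) → ℝ} {S T : X → X}
    (h𝒦 : ∀ A : Set X,
      (A.indicator fun _ => (1 : ℝ)) ∘ S - (A.indicator fun _ => (1 : ℝ)) ∘ T ∈ 𝒦)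
    (hL : ∀ A : Set X,
      0 ≤ L ((A.indicator fun _ => (1 : ℝ)) ∘ S - (A.indicator fun _ => (1 : ℝ)) ∘ T))
    {f : X → ℝ} (hf : IsGamble f) :
    0 ≤ NatExt 𝒦 L (f ∘ S - f ∘ T) := by
  refine natExt_nonneg_of_forall_lower_bound fun ε hε => ?_
  obtain ⟨n, A, c, hA⟩ := hf.exists_sub_sum_indicator_mem_Ico hε
  set I : Fin n → X → ℝ := fun k => (A k).indicator fun _ => (1 : ℝ)
  refine ⟨n, fun _ => ε, fun k => I k ∘ S - I k ∘ T, fun _ => hε.le, fun k => h𝒦 (A k),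
    fun x => ?_⟩
  have hdrop : ∑ k, ε * ((I k ∘ S - I k ∘ T) x - L (I k ∘ S - I k ∘ T))
      ≤ ε * ∑ k, I k (S x) - ε * ∑ k, I k (T x) := by
    rw [← mul_sub, ← sum_sub_distrib, mul_sum]
    refine sum_le_sum fun k _ => mul_le_mul_of_nonneg_left ?_ hε.le
    exact sub_le_self _ (hL (A k))
  have hS := hA (S x)
  have hT := hA (T x)
  simp only [Set.mem_Ico] at hS hT
  simp only [Pi.sub_apply, Function.comp_apply] at hdrop ⊢
  linarith

theorem stmt14_general (X : Type*) [Nonempty X] (𝒯 : Set (X → X))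
    (𝒦 : Set (X → ℝ))
    (hind : ∀ A : Set X, Set.indicator A (fun _ => (1 : ℝ)) ∈ 𝒦)
    (hdiff : ∀ f ∈ 𝒦, ∀ T ∈ 𝒯, (f - f ∘ T) ∈ 𝒦 ∧ (f ∘ T - f) ∈ 𝒦)
    (L : (X → ℝ) → ℝ)
    (hstrong : ∀ f ∈ 𝒦, ∀ T ∈ 𝒯, 0 ≤ L (f - f ∘ T) ∧ 0 ≤ L (f ∘ T - f)) :
    ∀ f : X → ℝ, IsGamble f → ∀ T ∈ 𝒯,
      0 ≤ NatExt 𝒦 L (f - f ∘ T) ∧ 0 ≤ NatExt 𝒦 L (f ∘ T - f) := by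
  intro f hf T hT
  exact ⟨natExt_comp_sub_comp_nonneg (S := id) (fun A => (hdiff _ (hind A) T hT).1)
      (fun A => (hstrong _ (hind A) T hT).1) hf,
    natExt_comp_sub_comp_nonneg (T := id) (fun A => (hdiff _ (hind A) T hT).2)
      (fun A => (hstrong _ (hind A) T hT).2) hf⟩

theorem stmt14 (X : Type*) [Nonempty X] (𝒯 : Set (X → X))
    (h𝒯 : IsTransformationMonoid 𝒯)
    (𝒦 : Set (X → ℝ)) (h𝒦g : ∀ f ∈ 𝒦, IsGamble f)
    (h𝒦T : ∀ f ∈ 𝒦, ∀ T ∈ 𝒯, f ∘ T ∈ 𝒦)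
    (hind : ∀ A : Set X, Set.indicator A (fun _ => (1 : ℝ)) ∈ 𝒦)
    (hdiff : ∀ f ∈ 𝒦, ∀ T ∈ 𝒯, (f - f ∘ T) ∈ 𝒦 ∧ (f ∘ T - f) ∈ 𝒦)
    (L : (X → ℝ) → ℝ) (hasl : AvoidsSureLoss 𝒦 L)
    (hstrong : ∀ f ∈ 𝒦, ∀ T ∈ 𝒯, 0 ≤ L (f - f ∘ T) ∧ 0 ≤ L (f ∘ T - f)) :
    ∀ f : X → ℝ, IsGamble f → ∀ T ∈ 𝒯,
      0 ≤ NatExt 𝒦 L (f - f ∘ T) ∧ 0 ≤ NatExt 𝒦 L (f ∘ T - f) :=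
  stmt14_general X 𝒯 𝒦 hind hdiff L hstrong
end
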